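/- arXiv:cs/0508119 — 2 statements merged into one kernel-verified Lean document; each statement's English description precedes it below -/
import Mathlib

section
/- Let (Ȳ,Z̄,V) be random variables over finite alphabets with joint pmf p'(ȳ,v)·∏_{m=1}^{M'} q'_m(z_m|y_m). Then for every m with 1 ≤ m < M': I(Ȳ_{{m+1,…,M'}};Z̄_{{m+1,…,M'}}|Z̄_{{1,…,m}},V) = Σ_{i=m+1}^{M'} I(Y_i;Z_i|Z̄_{{1,…,i−1}},V). -/
open Finset
open scoped Classical

noncomputable section

/-- The distribution (pmf) of the random variable `X` under the pmf `P` on the finite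
sample space `Ω`. -/
def dist {Ω α : Type*} [Fintype Ω] [Fintype α] (P : Ω → ℝ) (X : Ω → α) (a : α) : ℝ :=
  ∑ ω, if X ω = a then P ω else 0

/-- Shannon entropy (base 2) of the random variable `X` under the pmf `P`. -/
def Hent {Ω α : Type*} [Fintype Ω] [Fintype α] (P : Ω → ℝ) (X : Ω → α) : ℝ :=
  -∑ a, dist P X a * Real.logb 2 (dist P X a)

/-- Conditional entropy `H(X | Y)`. -/
def condEnt {Ω α β : Type*} [Fintype Ω] [Fintype α] [Fintype β]
    (P : Ω → ℝ) (X : Ω → α) (Y : Ω → β) : ℝ :=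
  Hent P (fun ω => (X ω, Y ω)) - Hent P Y

/-- Conditional mutual information `I(X ; Y | Z)`. -/
def condMI {Ω α β γ : Type*} [Fintype Ω] [Fintype α] [Fintype β] [Fintype γ]
    (P : Ω → ℝ) (X : Ω → α) (Y : Ω → β) (Z : Ω → γ) : ℝ :=
  Hent P (fun ω => (X ω, Z ω)) + Hent P (fun ω => (Y ω, Z ω))
    - Hent P (fun ω => (X ω, Y ω, Z ω)) - Hent P Z

/-- The ε-strongly typical set condition for a sequence `xs` with respect to pmf `p`:
`|N(a|xs)/n − p(a)| < ε/|α|` for every letter `a`. -/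
def StronglyTypical {α : Type*} [Fintype α] (p : α → ℝ) {n : ℕ} (xs : Fin n → α)
    (ε : ℝ) : Prop :=
  ∀ a : α, |((Finset.univ.filter fun k => xs k = a).card : ℝ) / n - p a|
    < ε / Fintype.card α

section YZV

variable {M' : ℕ}

/-- Canonical sample space for `(Ȳ, Z̄, V)`. -/
abbrev Samp (𝒴 𝒵 : Fin M' → Type*) (V : Type*) : Type _ :=
  (∀ i, 𝒴 i) × (∀ i, 𝒵 i) × V

variable {𝒴 𝒵 : Fin M' → Type*} [∀ i, Fintype (𝒴 i)] [∀ i, Fintype (𝒵 i)]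
  {V : Type*} [Fintype V]

/-- The joint pmf `p'(ȳ,v) · ∏ₘ q'ₘ(zₘ | yₘ)` on the canonical sample space: conditionally
on `(Ȳ,V)` the `Zₘ` are mutually independent and `Zₘ` depends only on `Yₘ`. -/
def Pjoint (p' : (∀ i, 𝒴 i) × V → ℝ) (q : ∀ m, 𝒴 m → 𝒵 m → ℝ) :
    Samp 𝒴 𝒵 V → ℝ :=
  fun ω => p' (ω.1, ω.2.2) * ∏ m, q m (ω.1 m) (ω.2.1 m)

/-- `Ȳ_I`. -/
def Ybar (I : Finset (Fin M')) : Samp 𝒴 𝒵 V → (∀ i : I, 𝒴 i.1) := fun ω i => ω.1 i.1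

/-- `Z̄_I`. -/
def Zbar (I : Finset (Fin M')) : Samp 𝒴 𝒵 V → (∀ i : I, 𝒵 i.1) := fun ω i => ω.2.1 i.1

/-- The pair `(Z̄_I, V)` used as a conditioning variable. -/
def ZbarV (I : Finset (Fin M')) : Samp 𝒴 𝒵 V → (∀ i : I, 𝒵 i.1) × V :=
  fun ω => (fun i => ω.2.1 i.1, ω.2.2)

/-- Membership in the region `B*`: `I(Ȳ_I; Z̄_I | Z̄_{Iᶜ}, V) ≤ Σ_{i∈I} R_i` for every
nonempty `I ⊆ {1,…,M'}`. -/
def memBstar (p' : (∀ i, 𝒴 i) × V → ℝ) (q : ∀ m, 𝒴 m → 𝒵 m → ℝ)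
    (R : Fin M' → ℝ) : Prop :=
  ∀ I : Finset (Fin M'), I.Nonempty →
    condMI (Pjoint p' q) (Ybar I) (Zbar I) (ZbarV Iᶜ) ≤ ∑ i ∈ I, R i

end YZV

/-!
Conditionally on `Y_i`, the output `Z_i` is drawn from `q_i` independently of `V`, of the
other inputs and of the other outputs. Hence for every `W` that is a function of
`(Ȳ, Z̄_{≠i}, V)` and determines `Y_i`, `dist(Z_i, W) = dist(W) · q_i(Y_i, Z_i)` and
`H(Z_i, W) = H(W) + H(Z_i | Y_i)`. Adding the outputs one at a time gives
`I(Ȳ_T; Z̄_T | Z̄_H, V) = G(T ∪ H) - G(H) - Σ_{i ∈ T} H(Z_i | Y_i)` with `G(S) = H(Z̄_S, V)`,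
and likewise `I(Y_i; Z_i | Z̄_{<i}, V) = G(≤ i) - G(< i) - H(Z_i | Y_i)`, so the right-hand
side of the corollary telescopes to its left-hand side.
-/

section Entropy

variable {Ω α β γ : Type*} [Fintype Ω] [Fintype α] [Fintype β] [Fintype γ] (P : Ω → ℝ)

lemma Hent_eq_neg_sum_mul_logb (X : Ω → α) :
    Hent P X = -∑ ω, P ω * Real.logb 2 (_root_.dist P X (X ω)) := by
  simp only [Hent, _root_.dist, Finset.sum_mul, ite_mul, zero_mul]
  rw [Finset.sum_comm]
  simp

lemma Hent_congr {X : Ω → α} {X' : Ω → β} (h : ∀ ω₁ ω₂, X ω₁ = X ω₂ ↔ X' ω₁ = X' ω₂) :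
    Hent P X = Hent P X' := by
  simp only [Hent_eq_neg_sum_mul_logb, _root_.dist, h]

lemma le_dist_self (hP : ∀ ω, 0 ≤ P ω) (X : Ω → α) (ω : Ω) :
    P ω ≤ _root_.dist P X (X ω) := by
  simpa [_root_.dist] using Finset.single_le_sum (f := fun ω' => if X ω' = X ω then P ω' else 0)
    (fun ω' _ => by split_ifs <;> simp [hP]) (Finset.mem_univ ω)

lemma Hent_pair_eq_of_dist_pair_eq_mul (hP : ∀ ω, 0 ≤ P ω) (Z : Ω → γ) (W : Ω → β)
    (k : Ω → ℝ) (hk : ∀ ω, P ω ≠ 0 → k ω ≠ 0)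
    (h : ∀ ω, _root_.dist P (fun ω => (Z ω, W ω)) (Z ω, W ω) = _root_.dist P W (W ω) * k ω) :
    Hent P (fun ω => (Z ω, W ω)) = Hent P W - ∑ ω, P ω * Real.logb 2 (k ω) := by
  have hterm : ∀ ω, P ω * Real.logb 2 (_root_.dist P (fun ω => (Z ω, W ω)) (Z ω, W ω))
      = P ω * Real.logb 2 (_root_.dist P W (W ω)) + P ω * Real.logb 2 (k ω) := by
    intro ω
    rcases eq_or_ne (P ω) 0 with h0 | h0
    · simp [h0]
    have hdist : _root_.dist P W (W ω) ≠ 0 :=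
      ((hP ω).lt_of_ne' h0).trans_le (le_dist_self P hP W ω) |>.ne'
    rw [h ω, Real.logb_mul hdist (hk ω h0), mul_add]
  rw [Hent_eq_neg_sum_mul_logb, Hent_eq_neg_sum_mul_logb]
  simp only [hterm, Finset.sum_add_distrib]
  ring

end Entropy

lemma Fintype.sum_apply_mul_congr {ι R : Type*} [Fintype ι] [DecidableEq ι]
    [NonUnitalNonAssocSemiring R] {κ : ι → Type*} [∀ j, Fintype (κ j)] (i : ι)
    {f g : κ i → R} (hfg : ∑ a, f a = ∑ a, g a) {F : (∀ j, κ j) → R}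
    (hF : ∀ x a, F (Function.update x i a) = F x) :
    ∑ x, f (x i) * F x = ∑ x, g (x i) * F x := by
  rcases isEmpty_or_nonempty (κ i) with hκ | ⟨⟨a₀⟩⟩
  · have : IsEmpty (∀ j, κ j) := ⟨fun x => hκ.elim (x i)⟩
    simp
  let e := (Equiv.piSplitAt i κ).symm
  have hFe : ∀ a r, F (e (a, r)) = F (e (a₀, r)) := fun a r => by
    rw [← hF (e (a₀, r)) a]
    congr 1
    ext j
    by_cases hj : j = i
    · subst hj; simp [e, Equiv.piSplitAt_symm_apply]
    · simp [e, Equiv.piSplitAt_symm_apply, hj]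
  have hsplit : ∀ h : κ i → R, ∑ x, h (x i) * F x = ∑ r, (∑ a, h a) * F (e (a₀, r)) := by
    intro h
    rw [← e.sum_comp, Fintype.sum_prod_type, Finset.sum_comm]
    simp [e, Equiv.piSplitAt_symm_apply, hFe, Finset.sum_mul]
  rw [hsplit, hsplit, hfg]

lemma Fin.sum_univ_filter_le_sub {G : Type*} [AddCommGroup G] {n m : ℕ} (hmn : m ≤ n)
    (f : ℕ → G) :
    ∑ i ∈ Finset.univ.filter (fun i : Fin n => m ≤ (i : ℕ)), (f (i + 1) - f i) = f n - f m := by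
  rw [Finset.sum_filter, Fin.sum_univ_eq_sum_range (fun i => if m ≤ i then f (i + 1) - f i else 0),
    ← Finset.sum_filter, ← Finset.sum_Ico_sub (f := f) hmn]
  congr 1
  ext k; simp; omega

section Channel

variable {M' : ℕ} {𝒴 𝒵 : Fin M' → Type*} {V : Type*}
  (p' : (∀ i, 𝒴 i) × V → ℝ) (q : ∀ m, 𝒴 m → 𝒵 m → ℝ)

lemma Pjoint_eq_mul_prod_erase (i : Fin M') (ω : Samp 𝒴 𝒵 V) :
    Pjoint p' q ω = q i (ω.1 i) (ω.2.1 i)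
      * (p' (ω.1, ω.2.2) * ∏ j ∈ Finset.univ.erase i, q j (ω.1 j) (ω.2.1 j)) := by
  rw [Pjoint, ← Finset.mul_prod_erase _ _ (Finset.mem_univ i)]
  ring

variable [∀ i, Fintype (𝒴 i)] [∀ i, Fintype (𝒵 i)] [Fintype V]

lemma sum_samp_eq (f : Samp 𝒴 𝒵 V → ℝ) : ∑ ω, f ω = ∑ y, ∑ v, ∑ z, f (y, z, v) := by
  simp only [Fintype.sum_prod_type]
  exact Finset.sum_congr rfl fun _ _ => Finset.sum_comm

lemma dist_Z_pair_eq_mul (hq1 : ∀ m y, ∑ z, q m y z = 1) (i : Fin M') {β : Type*} [Fintype β]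
    {W : Samp 𝒴 𝒵 V → β} (hW : ∀ ω a, W (ω.1, Function.update ω.2.1 i a, ω.2.2) = W ω)
    (hWY : ∀ ω ω', W ω = W ω' → ω.1 i = ω'.1 i) (ω₀ : Samp 𝒴 𝒵 V) :
    _root_.dist (Pjoint p' q) (fun ω => (ω.2.1 i, W ω)) (ω₀.2.1 i, W ω₀)
      = _root_.dist (Pjoint p' q) W (W ω₀) * q i (ω₀.1 i) (ω₀.2.1 i) := by
  set y₀ := ω₀.1 i
  set z₀ := ω₀.2.1 i
  simp only [_root_.dist, Finset.sum_mul, sum_samp_eq]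
  refine Finset.sum_congr rfl fun y _ => Finset.sum_congr rfl fun v _ => ?_
  set F : (∀ j, 𝒵 j) → ℝ := fun z =>
    if W (y, z, v) = W ω₀ then p' (y, v) * ∏ j ∈ Finset.univ.erase i, q j (y j) (z j) else 0
  have hF : ∀ z a, F (Function.update z i a) = F z := fun z a => by
    have hprod : ∏ j ∈ Finset.univ.erase i, q j (y j) (Function.update z i a j)
        = ∏ j ∈ Finset.univ.erase i, q j (y j) (z j) :=
      Finset.prod_congr rfl fun j hj => by rw [Function.update_of_ne (Finset.ne_of_mem_erase hj)]
    simp only [F, hprod]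
    rw [hW (y, z, v) a]
  have hP : ∀ z, W (y, z, v) = W ω₀ → Pjoint p' q (y, z, v) = q i y₀ (z i) * F z :=
    fun z hw => by rw [Pjoint_eq_mul_prod_erase p' q i, hWY _ _ hw]; simp only [F, if_pos hw]; rfl
  have hF0 : ∀ z, W (y, z, v) ≠ W ω₀ → F z = 0 := fun z hw => by simp [F, hw]
  calc _ = ∑ z, (if z i = z₀ then q i y₀ (z i) else 0) * F z := by
        refine Finset.sum_congr rfl fun z _ => ?_
        by_cases hw : W (y, z, v) = W ω₀
        · by_cases hz : z i = z₀ <;> simp [hw, hz, hP z hw]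
        · simp [hw, hF0 z hw]
    _ = ∑ z, (q i y₀ z₀ * q i y₀ (z i)) * F z := by
        refine Fintype.sum_apply_mul_congr i (f := fun a => if a = z₀ then q i y₀ a else 0)
          (g := fun a => q i y₀ z₀ * q i y₀ a) ?_ hF
        simp [← Finset.mul_sum, hq1]
    _ = _ := by
        refine Finset.sum_congr rfl fun z _ => ?_
        by_cases hw : W (y, z, v) = W ω₀
        · rw [if_pos hw, hP z hw]; ring
        · rw [if_neg hw, hF0 z hw]; ring

/-- `H(Z_i | Y_i)`, written as the expected log-loss of the channel `q i`. -/
def channelEnt (i : Fin M') : ℝ :=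
  -∑ ω, Pjoint p' q ω * Real.logb 2 (q i (ω.1 i) (ω.2.1 i))

variable {p' q}

lemma Hent_Z_pair_eq_add (hp'0 : ∀ yv, 0 ≤ p' yv) (hq0 : ∀ m y z, 0 ≤ q m y z)
    (hq1 : ∀ m y, ∑ z, q m y z = 1) (i : Fin M') {β : Type*} [Fintype β]
    {W : Samp 𝒴 𝒵 V → β} (hW : ∀ ω a, W (ω.1, Function.update ω.2.1 i a, ω.2.2) = W ω)
    (hWY : ∀ ω ω', W ω = W ω' → ω.1 i = ω'.1 i) :
    Hent (Pjoint p' q) (fun ω => (ω.2.1 i, W ω)) = Hent (Pjoint p' q) W + channelEnt p' q i := by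
  have hP : ∀ ω, 0 ≤ Pjoint p' q ω := fun ω =>
    mul_nonneg (hp'0 _) (Finset.prod_nonneg fun j _ => hq0 _ _ _)
  have hq : ∀ ω, Pjoint p' q ω ≠ 0 → q i (ω.1 i) (ω.2.1 i) ≠ 0 := fun ω hω hq =>
    hω (by rw [Pjoint_eq_mul_prod_erase p' q i, hq, zero_mul])
  rw [Hent_pair_eq_of_dist_pair_eq_mul _ hP _ _ _ hq (dist_Z_pair_eq_mul p' q hq1 i hW hWY),
    channelEnt]
  ring

lemma Hent_Ybar_Zbar_ZbarV_eq_add (hp'0 : ∀ yv, 0 ≤ p' yv) (hq0 : ∀ m y z, 0 ≤ q m y z)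
    (hq1 : ∀ m y, ∑ z, q m y z = 1) {T H S : Finset (Fin M')} (hTH : Disjoint T H)
    (hST : S ⊆ T) :
    Hent (Pjoint p' q) (fun ω : Samp 𝒴 𝒵 V => (Ybar T ω, Zbar S ω, ZbarV H ω))
      = Hent (Pjoint p' q) (fun ω => (Ybar T ω, ZbarV H ω)) + ∑ i ∈ S, channelEnt p' q i := by
  induction S using Finset.induction_on with
  | empty =>
    rw [Finset.sum_empty, add_zero]
    exact Hent_congr _ fun ω₁ ω₂ => by simp [Ybar, Zbar, ZbarV, funext_iff]
  | @insert i S hiS ih =>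
    have hiT : i ∈ T := hST (Finset.mem_insert_self i S)
    have hiH : i ∉ H := Finset.disjoint_left.mp hTH hiT
    rw [Finset.sum_insert hiS, add_left_comm, ← ih ((Finset.subset_insert i S).trans hST),
      add_comm,
      ← Hent_Z_pair_eq_add hp'0 hq0 hq1 i ?update ?determines]
    · refine Hent_congr _ fun ω₁ ω₂ => ?_
      simp only [Ybar, Zbar, ZbarV, Prod.mk.injEq, funext_iff, Subtype.forall,
        Finset.mem_insert, forall_eq_or_imp]
      tauto
    case update =>
      intro ω a
      simp only [Ybar, Zbar, ZbarV, Prod.mk.injEq, funext_iff, Subtype.forall, implies_true,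
        and_true, true_and]
      exact ⟨fun j hj => Function.update_of_ne (ne_of_mem_of_not_mem hj hiS) _ _,
        fun j hj => Function.update_of_ne (ne_of_mem_of_not_mem hj hiH) _ _⟩
    case determines =>
      intro ω ω' h
      exact congrFun (congrArg Prod.fst h) ⟨i, hiT⟩

lemma condMI_Ybar_Zbar_ZbarV_eq (hp'0 : ∀ yv, 0 ≤ p' yv) (hq0 : ∀ m y z, 0 ≤ q m y z)
    (hq1 : ∀ m y, ∑ z, q m y z = 1) {T H : Finset (Fin M')} (hTH : Disjoint T H) :
    condMI (Pjoint p' q) (Ybar T) (Zbar T) (ZbarV H : Samp 𝒴 𝒵 V → _)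
      = Hent (Pjoint p' q) (ZbarV (T ∪ H) : Samp 𝒴 𝒵 V → _) - Hent (Pjoint p' q) (ZbarV H)
        - ∑ i ∈ T, channelEnt p' q i := by
  have hZ : Hent (Pjoint p' q) (fun ω : Samp 𝒴 𝒵 V => (Zbar T ω, ZbarV H ω))
      = Hent (Pjoint p' q) (ZbarV (T ∪ H)) :=
    Hent_congr _ fun ω₁ ω₂ => by
      simp [Zbar, ZbarV, funext_iff, or_imp, forall_and, and_assoc]
  rw [condMI, Hent_Ybar_Zbar_ZbarV_eq_add hp'0 hq0 hq1 hTH subset_rfl, hZ]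
  ring

lemma condMI_Y_Z_ZbarV_eq (hp'0 : ∀ yv, 0 ≤ p' yv) (hq0 : ∀ m y z, 0 ≤ q m y z)
    (hq1 : ∀ m y, ∑ z, q m y z = 1) {i : Fin M'} {L : Finset (Fin M')} (hiL : i ∉ L) :
    condMI (Pjoint p' q) (fun ω => ω.1 i) (fun ω => ω.2.1 i) (ZbarV L : Samp 𝒴 𝒵 V → _)
      = Hent (Pjoint p' q) (ZbarV (insert i L) : Samp 𝒴 𝒵 V → _) - Hent (Pjoint p' q) (ZbarV L)
        - channelEnt p' q i := by
  have hYZ : Hent (Pjoint p' q) (fun ω : Samp 𝒴 𝒵 V => (ω.1 i, ω.2.1 i, ZbarV L ω))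
      = Hent (Pjoint p' q) (fun ω => (ω.1 i, ZbarV L ω)) + channelEnt p' q i := by
    rw [← Hent_Z_pair_eq_add hp'0 hq0 hq1 i ?update fun ω ω' h => congrArg Prod.fst h]
    · exact Hent_congr _ fun ω₁ ω₂ => by simp only [Prod.mk.injEq]; tauto
    case update =>
      intro ω a
      simp only [ZbarV, Prod.mk.injEq, funext_iff, Subtype.forall, and_true, true_and]
      exact fun j hj => Function.update_of_ne (ne_of_mem_of_not_mem hj hiL) _ _
  have hZ : Hent (Pjoint p' q) (fun ω : Samp 𝒴 𝒵 V => (ω.2.1 i, ZbarV L ω))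
      = Hent (Pjoint p' q) (ZbarV (insert i L)) :=
    Hent_congr _ fun ω₁ ω₂ => by simp [ZbarV, funext_iff, forall_eq_or_imp, and_assoc]
  rw [condMI, hYZ, hZ]
  ring

end Channel

-- Indices are 0-based: the paper's `{m+1, …, M'}` is `{i | m ≤ i}` and `{1, …, m}` is
-- `{i | i < m}`.
theorem statement_8_general (M' : ℕ) (𝒴 𝒵 : Fin M' → Type) [∀ i, Fintype (𝒴 i)]
    [∀ i, Fintype (𝒵 i)] (V : Type) [Fintype V]
    (p' : (∀ i, 𝒴 i) × V → ℝ) (q : ∀ m, 𝒴 m → 𝒵 m → ℝ)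
    (hp'0 : ∀ yv, 0 ≤ p' yv)
    (hq0 : ∀ m y z, 0 ≤ q m y z) (hq1 : ∀ m y, ∑ z, q m y z = 1)
    (m : ℕ) (hm2 : m < M') :
    condMI (Pjoint p' q)
        (Ybar (Finset.univ.filter fun i : Fin M' => m ≤ (i : ℕ)))
        (Zbar (Finset.univ.filter fun i : Fin M' => m ≤ (i : ℕ)))
        (ZbarV (Finset.univ.filter fun i : Fin M' => (i : ℕ) < m))
      = ∑ i ∈ Finset.univ.filter (fun i : Fin M' => m ≤ (i : ℕ)),
          condMI (Pjoint p' q)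
            (fun ω : Samp 𝒴 𝒵 V => ω.1 i)
            (fun ω : Samp 𝒴 𝒵 V => ω.2.1 i)
            (ZbarV (Finset.univ.filter fun j : Fin M' => j < i)) := by
  set G : ℕ → ℝ := fun k =>
    Hent (Pjoint p' q) (ZbarV (univ.filter fun j : Fin M' => (j : ℕ) < k) : Samp 𝒴 𝒵 V → _)
  have hterm : ∀ i : Fin M', condMI (Pjoint p' q) (fun ω : Samp 𝒴 𝒵 V => ω.1 i)
      (fun ω => ω.2.1 i) (ZbarV (univ.filter fun j : Fin M' => j < i))
        = G (i + 1) - G i - channelEnt p' q i := by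
    intro i
    have hinsert : insert i (univ.filter fun j : Fin M' => j < i)
        = univ.filter fun j : Fin M' => (j : ℕ) < i + 1 := by
      ext j
      simp only [mem_insert, mem_filter, mem_univ, true_and, Fin.ext_iff, Fin.lt_def]
      omega
    have hbelow : (univ.filter fun j : Fin M' => j < i)
        = univ.filter fun j : Fin M' => (j : ℕ) < i := by
      ext j; simp only [mem_filter, mem_univ, true_and, Fin.lt_def]
    rw [condMI_Y_Z_ZbarV_eq hp'0 hq0 hq1 (by simp), hinsert, hbelow]
  have hdisj : Disjoint (univ.filter fun i : Fin M' => m ≤ (i : ℕ))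
      (univ.filter fun i : Fin M' => (i : ℕ) < m) :=
    disjoint_filter.2 fun i _ hi => by omega
  have hunion : ((univ.filter fun i : Fin M' => m ≤ (i : ℕ))
      ∪ univ.filter fun i : Fin M' => (i : ℕ) < m)
        = univ.filter fun j : Fin M' => (j : ℕ) < M' := by
    ext j; simp; omega
  rw [condMI_Ybar_Zbar_ZbarV_eq hp'0 hq0 hq1 hdisj, Finset.sum_congr rfl fun i _ => hterm i,
    Finset.sum_sub_distrib, Fin.sum_univ_filter_le_sub hm2.le G, hunion]

/-- Corollary B.6 (cor:chain3) of the paper: for `1 ≤ m < M'` (0-indexed, the tail set is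
`{i : m ≤ (i:ℕ)}` and the head set `{i : (i:ℕ) < m}`),
`I(Ȳ_{{m+1,…,M'}}; Z̄_{{m+1,…,M'}} | Z̄_{{1,…,m}}, V)
  = Σ_{i=m+1}^{M'} I(Y_i; Z_i | Z̄_{{1,…,i−1}}, V)`. -/
theorem statement_8 (M' : ℕ) (𝒴 𝒵 : Fin M' → Type) [∀ i, Fintype (𝒴 i)]
    [∀ i, Fintype (𝒵 i)] (V : Type) [Fintype V]
    (p' : (∀ i, 𝒴 i) × V → ℝ) (q : ∀ m, 𝒴 m → 𝒵 m → ℝ)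
    (hp'0 : ∀ yv, 0 ≤ p' yv) (hp'1 : ∑ yv, p' yv = 1)
    (hq0 : ∀ m y z, 0 ≤ q m y z) (hq1 : ∀ m y, ∑ z, q m y z = 1)
    (m : ℕ) (hm1 : 1 ≤ m) (hm2 : m < M') :
    condMI (Pjoint p' q)
        (Ybar (Finset.univ.filter fun i : Fin M' => m ≤ (i : ℕ)))
        (Zbar (Finset.univ.filter fun i : Fin M' => m ≤ (i : ℕ)))
        (ZbarV (Finset.univ.filter fun i : Fin M' => (i : ℕ) < m))
      = ∑ i ∈ Finset.univ.filter (fun i : Fin M' => m ≤ (i : ℕ)),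
          condMI (Pjoint p' q)
            (fun ω : Samp 𝒴 𝒵 V => ω.1 i)
            (fun ω : Samp 𝒴 𝒵 V => ω.2.1 i)
            (ZbarV (Finset.univ.filter fun j : Fin M' => j < i)) :=
  statement_8_general M' 𝒴 𝒵 V p' q hp'0 hq0 hq1 m hm2
end
end

section
/- Let (Ȳ,Z̄,V) be random variables over finite alphabets with joint pmf p'(ȳ,v)·∏_{m=1}^{M'} q'_m(z_m|y_m), and assume the following positivity (non-degeneracy) condition: for all disjoint nonempty A, B ⊆ {1,…,M'} and every C ⊆ {1,…,M'}\(A∪B), I(Z̄_A;Z̄_B|Z̄_C,V) > 0. Let B* be the set of R' ∈ ℝ^{M'} with I(Ȳ_I;Z̄_I|Z̄_{I^c},V) ≤ Σ_{i∈I} R'_i for every nonempty I ⊆ {1,…,M'}. If R' ∈ B* and both I(Ȳ_I;Z̄_I|Z̄_{I^c},V) = Σ_{i∈I} R'_i and I(Ȳ_{I'};Z̄_{I'}|Z̄_{I'^c},V) = Σ_{i∈I'} R'_i hold for two distinct nonempty sets I, I' ⊆ {1,…,M'}, then either I ⊂ I' or I' ⊂ I (strict inclusion). -/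
open Finset
open scoped Classical

noncomputable section

section Aux
variable {Ω α β : Type*} [Fintype Ω] [Fintype α] [Fintype β]

lemma sum_dist_mul (P : Ω → ℝ) (X : Ω → α) (φ : α → ℝ) :
    ∑ a, dist P X a * φ a = ∑ ω, P ω * φ (X ω) := by
  calc ∑ a, dist P X a * φ a
      = ∑ a, ∑ ω, (if X ω = a then P ω * φ a else 0) := by
        simp [_root_.dist, Finset.sum_mul, ite_mul]
    _ = ∑ ω, ∑ a, (if X ω = a then P ω * φ a else 0) := Finset.sum_comm
    _ = ∑ ω, P ω * φ (X ω) := by simp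

lemma Hent_eq_sum (P : Ω → ℝ) (X : Ω → α) :
    Hent P X = -∑ ω, P ω * Real.logb 2 (dist P X (X ω)) := by
  rw [Hent, sum_dist_mul P X (fun a => Real.logb 2 (dist P X a))]

lemma dist_comp_inj (P : Ω → ℝ) (X : Ω → α) {f : α → β} (hf : Function.Injective f) (a : α) :
    dist P (fun ω => f (X ω)) (f a) = dist P X a := by
  show (∑ ω, if f (X ω) = f a then P ω else 0) = _
  refine Finset.sum_congr rfl fun ω _ => ?_
  simp [hf.eq_iff]

lemma Hent_comp_inj (P : Ω → ℝ) (X : Ω → α) {f : α → β} (hf : Function.Injective f) :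
    Hent P (fun ω => f (X ω)) = Hent P X := by
  rw [Hent_eq_sum, Hent_eq_sum]
  congr 1
  exact Finset.sum_congr rfl fun ω _ => by rw [dist_comp_inj P X hf]

lemma le_dist (P : Ω → ℝ) (hP : ∀ ω, 0 ≤ P ω) (X : Ω → α) (ω0 : Ω) :
    P ω0 ≤ dist P X (X ω0) := by
  have h : ∀ ω ∈ Finset.univ, (0:ℝ) ≤ if X ω = X ω0 then P ω else 0 := by
    intro ω _; split <;> simp [hP ω]
  have := Finset.single_le_sum h (Finset.mem_univ ω0)
  simpa [_root_.dist] using this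

end Aux

section Main
variable {M' : ℕ} {𝒴 𝒵 : Fin M' → Type*} [∀ i, Fintype (𝒴 i)] [∀ i, Fintype (𝒵 i)]
  {V : Type*} [Fintype V]

def zEquiv (𝒵 : Fin M' → Type*) (I : Finset (Fin M')) :
    (∀ m, 𝒵 m) ≃ (∀ i : I, 𝒵 i.1) × (∀ i : (Iᶜ : Finset (Fin M')), 𝒵 i.1) where
  toFun z := (fun i => z i.1, fun i => z i.1)
  invFun uw m := if h : m ∈ I then uw.1 ⟨m, h⟩ else uw.2 ⟨m, Finset.mem_compl.mpr h⟩
  left_inv z := by funext m; by_cases h : m ∈ I <;> simp [h]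
  right_inv uw := by
    refine Prod.ext ?_ ?_ <;> funext i
    · simp [i.2]
    · have h : ¬ (i.1 ∈ I) := Finset.mem_compl.mp i.2
      simp [h]

omit [∀ i, Fintype (𝒵 i)] in
lemma zEquiv_symm_mem (I : Finset (Fin M')) (u : ∀ i : I, 𝒵 i.1)
    (w : ∀ i : (Iᶜ : Finset (Fin M')), 𝒵 i.1) :
    (fun i : I => (zEquiv 𝒵 I).symm (u, w) i.1) = u :=
  congrArg Prod.fst ((zEquiv 𝒵 I).right_inv (u, w))

omit [∀ i, Fintype (𝒵 i)] in
lemma zEquiv_symm_not_mem (I : Finset (Fin M')) (u : ∀ i : I, 𝒵 i.1)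
    (w : ∀ i : (Iᶜ : Finset (Fin M')), 𝒵 i.1) :
    (fun i : (Iᶜ : Finset (Fin M')) => (zEquiv 𝒵 I).symm (u, w) i.1) = w :=
  congrArg Prod.snd ((zEquiv 𝒵 I).right_inv (u, w))

lemma prod_split (I : Finset (Fin M')) (f : ∀ m : Fin M', ℝ) :
    ∏ m, f m = (∏ i : I, f i.1) * ∏ i : (Iᶜ : Finset (Fin M')), f i.1 := by
  rw [Finset.prod_coe_sort, Finset.prod_coe_sort, Finset.prod_mul_prod_compl]

lemma sum_pi_prod (I : Finset (Fin M')) (g : ∀ i : I, 𝒵 i.1 → ℝ) :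
    ∑ u : (∀ i : I, 𝒵 i.1), ∏ i, g i (u i) = ∏ i : I, ∑ z, g i z := by
  rw [Finset.prod_univ_sum, Fintype.piFinset_univ]

omit [∀ i, Fintype (𝒵 i)] in
lemma z_cond_iff (I : Finset (Fin M')) (z : ∀ m, 𝒵 m) (zI : ∀ i : I, 𝒵 i.1)
    (zc : ∀ i : (Iᶜ : Finset (Fin M')), 𝒵 i.1) :
    ((fun i : I => z i.1) = zI ∧ (fun i : (Iᶜ : Finset (Fin M')) => z i.1) = zc)
      ↔ z = (zEquiv 𝒵 I).symm (zI, zc) := by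
  rw [eq_comm (b := (zEquiv 𝒵 I).symm (zI, zc)), Equiv.symm_apply_eq, Prod.ext_iff]
  exact ⟨fun ⟨h1, h2⟩ => ⟨h1.symm, h2.symm⟩, fun ⟨h1, h2⟩ => ⟨h1.symm, h2.symm⟩⟩


set_option linter.unusedSectionVars false in
lemma Ybar_apply (I : Finset (Fin M')) (y : ∀ i, 𝒴 i) (z : ∀ i, 𝒵 i) (v : V) :
    Ybar I (y, z, v) = fun i : I => y i.1 := rfl
set_option linter.unusedSectionVars false in
lemma Zbar_apply (I : Finset (Fin M')) (y : ∀ i, 𝒴 i) (z : ∀ i, 𝒵 i) (v : V) :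
    Zbar I (y, z, v) = fun i : I => z i.1 := rfl
set_option linter.unusedSectionVars false in
lemma ZbarV_apply (I : Finset (Fin M')) (y : ∀ i, 𝒴 i) (z : ∀ i, 𝒵 i) (v : V) :
    ZbarV I (y, z, v) = (fun i : I => z i.1, v) := rfl

variable (p' : (∀ i, 𝒴 i) × V → ℝ) (q : ∀ m, 𝒴 m → 𝒵 m → ℝ)

set_option linter.unusedSectionVars false in
lemma Pjoint_apply (y : ∀ i, 𝒴 i) (z : ∀ i, 𝒵 i) (v : V) :
    Pjoint p' q (y, z, v) = p' (y, v) * ∏ m, q m (y m) (z m) := rfl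


lemma dist_W_eq (hq1 : ∀ m y, ∑ z, q m y z = 1) (I : Finset (Fin M'))
    (yI : ∀ i : I, 𝒴 i.1) (zI : ∀ i : I, 𝒵 i.1)
    (zc : ∀ i : (Iᶜ : Finset (Fin M')), 𝒵 i.1) (v0 : V) :
    dist (Pjoint p' q) (fun ω => (Ybar I ω, Zbar I ω, ZbarV Iᶜ ω)) (yI, zI, (zc, v0))
      = dist (Pjoint p' q) (fun ω => (Ybar I ω, ZbarV Iᶜ ω)) (yI, (zc, v0))
        * ∏ i : I, q i.1 (yI i) (zI i) := by
  have h1 : ∀ i : I, (zEquiv 𝒵 I).symm (zI, zc) i.1 = zI i := fun i =>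
    congrFun (zEquiv_symm_mem I zI zc) i
  have h2 : ∀ i : (Iᶜ : Finset (Fin M')), (zEquiv 𝒵 I).symm (zI, zc) i.1 = zc i := fun i =>
    congrFun (zEquiv_symm_not_mem I zI zc) i
  have hL : dist (Pjoint p' q) (fun ω => (Ybar I ω, Zbar I ω, ZbarV Iᶜ ω)) (yI, zI, (zc, v0))
      = ∑ y : (∀ i, 𝒴 i), (if (fun i : I => y i.1) = yI then
          p' (y, v0) * ∏ m, q m (y m) ((zEquiv 𝒵 I).symm (zI, zc) m) else 0) := by
    show (∑ ω : Samp 𝒴 𝒵 V, _) = _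
    rw [Fintype.sum_prod_type]
    refine Finset.sum_congr rfl fun y _ => ?_
    rw [Fintype.sum_prod_type]
    by_cases hy : (fun i : I => y i.1) = yI
    · simp only [Ybar_apply, Zbar_apply, ZbarV_apply, Pjoint_apply, Prod.mk.injEq, hy, true_and,
        eq_self_iff_true, ← and_assoc, z_cond_iff I _ zI zc]
      rw [Finset.sum_comm]
      simp [ite_and]
    · simp [Ybar_apply, Prod.mk.injEq, hy]
  have hR : dist (Pjoint p' q) (fun ω => (Ybar I ω, ZbarV Iᶜ ω)) (yI, (zc, v0))
      = ∑ y : (∀ i, 𝒴 i), (if (fun i : I => y i.1) = yI then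
          p' (y, v0) * ∏ i : (Iᶜ : Finset (Fin M')), q i.1 (y i.1) (zc i) else 0) := by
    show (∑ ω : Samp 𝒴 𝒵 V, _) = _
    rw [Fintype.sum_prod_type]
    refine Finset.sum_congr rfl fun y _ => ?_
    rw [Fintype.sum_prod_type]
    by_cases hy : (fun i : I => y i.1) = yI
    · simp only [Ybar_apply, ZbarV_apply, Pjoint_apply, Prod.mk.injEq, hy, true_and,
        eq_self_iff_true]
      have step1 : ∀ z : (∀ i, 𝒵 i),
          (∑ v : V, if ((fun i : (Iᶜ : Finset (Fin M')) => z i.1) = zc ∧ v = v0) then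
              p' (y, v) * ∏ m, q m (y m) (z m) else 0)
            = (if (fun i : (Iᶜ : Finset (Fin M')) => z i.1) = zc then
              p' (y, v0) * ∏ m, q m (y m) (z m) else 0) := by
        intro z
        by_cases hc : (fun i : (Iᶜ : Finset (Fin M')) => z i.1) = zc
        · simp [hc]
        · simp [hc]
      simp only [step1]
      rw [← Equiv.sum_comp (zEquiv 𝒵 I).symm
        (fun z => if (fun i : (Iᶜ : Finset (Fin M')) => z i.1) = zc then
          p' (y, v0) * ∏ m, q m (y m) (z m) else 0)]
      rw [Fintype.sum_prod_type]
      simp only [zEquiv_symm_not_mem]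
      rw [Finset.sum_congr rfl fun u _ => Finset.sum_ite_eq' Finset.univ zc
        (fun w => p' (y, v0) * ∏ m, q m (y m) ((zEquiv 𝒵 I).symm (u, w) m))]
      simp only [Finset.mem_univ, if_true]
      have hsplit : ∀ u : (∀ i : I, 𝒵 i.1),
          (∏ m, q m (y m) ((zEquiv 𝒵 I).symm (u, zc) m))
            = (∏ i : I, q i.1 (y i.1) (u i))
              * ∏ i : (Iᶜ : Finset (Fin M')), q i.1 (y i.1) (zc i) := by
        intro u
        rw [prod_split I (fun m => q m (y m) ((zEquiv 𝒵 I).symm (u, zc) m))]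
        congr 1
        · exact Finset.prod_congr rfl fun i _ => by
            rw [congrFun (zEquiv_symm_mem I u zc) i]
        · exact Finset.prod_congr rfl fun i _ => by
            rw [congrFun (zEquiv_symm_not_mem I u zc) i]
      simp only [hsplit]
      have hsum : (∑ x : (∀ i : I, 𝒵 i.1), ∏ i : I, q i.1 (y i.1) (x i)) = 1 := by
        rw [sum_pi_prod, Finset.prod_congr rfl fun (i : I) _ => hq1 i.1 (y i.1)]
        simp
      rw [← Finset.mul_sum, ← Finset.sum_mul, hsum, one_mul]
    · simp [Ybar_apply, Prod.mk.injEq, hy]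
  rw [hL, hR, Finset.sum_mul]
  refine Finset.sum_congr rfl fun y _ => ?_
  by_cases hy : (fun i : I => y i.1) = yI
  · rw [if_pos hy, if_pos hy, prod_split I (fun m => q m (y m) ((zEquiv 𝒵 I).symm (zI, zc) m))]
    have e1 : (∏ i : I, q i.1 (y i.1) ((zEquiv 𝒵 I).symm (zI, zc) i.1))
        = ∏ i : I, q i.1 (yI i) (zI i) :=
      Finset.prod_congr rfl fun i _ => by rw [h1 i, congrFun hy i]
    have e2 : (∏ i : (Iᶜ : Finset (Fin M')), q i.1 (y i.1) ((zEquiv 𝒵 I).symm (zI, zc) i.1))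
        = ∏ i : (Iᶜ : Finset (Fin M')), q i.1 (y i.1) (zc i) :=
      Finset.prod_congr rfl fun i _ => by rw [h2 i]
    rw [e1, e2]; ring
  · rw [if_neg hy, if_neg hy, zero_mul]

lemma hent_key (hp'0 : ∀ yv, 0 ≤ p' yv) (hq0 : ∀ m y z, 0 ≤ q m y z)
    (hq1 : ∀ m y, ∑ z, q m y z = 1) (I : Finset (Fin M')) :
    Hent (Pjoint p' q) (fun ω => (Ybar I ω, Zbar I ω, ZbarV Iᶜ ω))
      = Hent (Pjoint p' q) (fun ω => (Ybar I ω, ZbarV Iᶜ ω))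
        + ∑ i ∈ I, (-∑ ω : Samp 𝒴 𝒵 V,
            Pjoint p' q ω * Real.logb 2 (q i (ω.1 i) (ω.2.1 i))) := by
  have hP0 : ∀ ω : Samp 𝒴 𝒵 V, 0 ≤ Pjoint p' q ω := fun ω =>
    mul_nonneg (hp'0 _) (Finset.prod_nonneg fun m _ => hq0 _ _ _)
  rw [Hent_eq_sum, Hent_eq_sum]
  have key : ∀ ω : Samp 𝒴 𝒵 V,
      Pjoint p' q ω * Real.logb 2 (dist (Pjoint p' q)
          (fun ω => (Ybar I ω, Zbar I ω, ZbarV Iᶜ ω)) (Ybar I ω, Zbar I ω, ZbarV Iᶜ ω))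
        = Pjoint p' q ω * Real.logb 2 (dist (Pjoint p' q)
            (fun ω => (Ybar I ω, ZbarV Iᶜ ω)) (Ybar I ω, ZbarV Iᶜ ω))
          + ∑ i ∈ I, Pjoint p' q ω * Real.logb 2 (q i (ω.1 i) (ω.2.1 i)) := by
    intro ω
    rcases eq_or_lt_of_le (hP0 ω) with h0 | hpos
    · simp [← h0]
    · have hd : dist (Pjoint p' q) (fun ω => (Ybar I ω, Zbar I ω, ZbarV Iᶜ ω))
            (Ybar I ω, Zbar I ω, ZbarV Iᶜ ω)
          = dist (Pjoint p' q) (fun ω => (Ybar I ω, ZbarV Iᶜ ω)) (Ybar I ω, ZbarV Iᶜ ω)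
            * ∏ i : I, q i.1 (ω.1 i.1) (ω.2.1 i.1) :=
        dist_W_eq p' q hq1 I (Ybar I ω) (Zbar I ω) (fun i => ω.2.1 i.1) ω.2.2
      have hA0 : 0 < dist (Pjoint p' q) (fun ω => (Ybar I ω, ZbarV Iᶜ ω))
          (Ybar I ω, ZbarV Iᶜ ω) :=
        lt_of_lt_of_le hpos (le_dist (Pjoint p' q) hP0 (fun ω => (Ybar I ω, ZbarV Iᶜ ω)) ω)
      have hfull : (∏ m, q m (ω.1 m) (ω.2.1 m)) ≠ 0 := by
        intro h
        have : Pjoint p' q ω = 0 := by rw [Pjoint, h, mul_zero]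
        exact hpos.ne' this
      have heach : ∀ m, q m (ω.1 m) (ω.2.1 m) ≠ 0 := by
        intro m
        exact Finset.prod_ne_zero_iff.mp hfull m (Finset.mem_univ m)
      have hQ0 : (∏ i : I, q i.1 (ω.1 i.1) (ω.2.1 i.1)) ≠ 0 :=
        Finset.prod_ne_zero_iff.mpr fun i _ => heach i.1
      rw [hd, Real.logb_mul hA0.ne' hQ0, mul_add]
      congr 1
      rw [Real.logb_prod Finset.univ _ (fun i _ => heach i.1), Finset.mul_sum]
      rw [← Finset.sum_coe_sort I (fun i => Pjoint p' q ω * Real.logb 2 (q i (ω.1 i) (ω.2.1 i)))]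
  rw [Finset.sum_congr rfl fun ω _ => key ω, Finset.sum_add_distrib, neg_add, Finset.sum_comm]
  congr 1
  rw [← Finset.sum_neg_distrib]

set_option maxHeartbeats 1000000 in
variable {p' q} in
lemma hent_pairZ (A C : Finset (Fin M')) :
    Hent (Pjoint p' q) (fun ω => (Zbar A ω, ZbarV C ω))
      = Hent (Pjoint p' q) (ZbarV (A ∪ C)) := by
  have hf : Function.Injective
      (fun (x : (∀ i : ((A ∪ C : Finset (Fin M'))), 𝒵 i.1) × V) =>
        ((fun i : A => x.1 ⟨i.1, Finset.mem_union_left C i.2⟩),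
          ((fun i : C => x.1 ⟨i.1, Finset.mem_union_right A i.2⟩), x.2))) := by
    rintro ⟨u, v⟩ ⟨u', v'⟩ h
    simp only [Prod.mk.injEq] at h
    obtain ⟨h1, h2, h3⟩ := h
    refine Prod.ext ?_ h3
    funext i
    rcases Finset.mem_union.mp i.2 with hi | hi
    · exact congrFun h1 ⟨i.1, hi⟩
    · exact congrFun h2 ⟨i.1, hi⟩
  exact Hent_comp_inj (Pjoint p' q) (ZbarV (A ∪ C)) hf

set_option maxHeartbeats 1000000 in
variable {p' q} in
lemma hent_tripleZ (A B C : Finset (Fin M')) :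
    Hent (Pjoint p' q) (fun ω => (Zbar A ω, Zbar B ω, ZbarV C ω))
      = Hent (Pjoint p' q) (ZbarV (A ∪ B ∪ C)) := by
  have hf : Function.Injective
      (fun (x : (∀ i : ((A ∪ B ∪ C : Finset (Fin M'))), 𝒵 i.1) × V) =>
        ((fun i : A => x.1 ⟨i.1, Finset.mem_union_left C (Finset.mem_union_left B i.2)⟩),
          ((fun i : B => x.1 ⟨i.1, Finset.mem_union_left C (Finset.mem_union_right A i.2)⟩),
            ((fun i : C => x.1 ⟨i.1, Finset.mem_union_right _ i.2⟩), x.2)))) := by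
    rintro ⟨u, v⟩ ⟨u', v'⟩ h
    simp only [Prod.mk.injEq] at h
    obtain ⟨h1, h2, h3, h4⟩ := h
    refine Prod.ext ?_ h4
    funext i
    rcases Finset.mem_union.mp i.2 with hi | hi
    · rcases Finset.mem_union.mp hi with hi' | hi'
      · exact congrFun h1 ⟨i.1, hi'⟩
      · exact congrFun h2 ⟨i.1, hi'⟩
    · exact congrFun h3 ⟨i.1, hi⟩
  exact Hent_comp_inj (Pjoint p' q) (ZbarV (A ∪ B ∪ C)) hf

lemma condMI_z_formula (A B C : Finset (Fin M')) :
    condMI (Pjoint p' q) (Zbar A) (Zbar B) (ZbarV C)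
      = Hent (Pjoint p' q) (ZbarV (A ∪ C)) + Hent (Pjoint p' q) (ZbarV (B ∪ C))
        - Hent (Pjoint p' q) (ZbarV (A ∪ B ∪ C)) - Hent (Pjoint p' q) (ZbarV C) := by
  rw [condMI, hent_pairZ A C, hent_pairZ B C, hent_tripleZ A B C]

lemma condMI_formula (hp'0 : ∀ yv, 0 ≤ p' yv) (hq0 : ∀ m y z, 0 ≤ q m y z)
    (hq1 : ∀ m y, ∑ z, q m y z = 1) (I : Finset (Fin M')) :
    condMI (Pjoint p' q) (Ybar I) (Zbar I) (ZbarV Iᶜ)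
      = Hent (Pjoint p' q) (ZbarV (Finset.univ : Finset (Fin M')))
        - Hent (Pjoint p' q) (ZbarV Iᶜ)
        - ∑ i ∈ I, (-∑ ω : Samp 𝒴 𝒵 V,
            Pjoint p' q ω * Real.logb 2 (q i (ω.1 i) (ω.2.1 i))) := by
  rw [condMI, hent_key p' q hp'0 hq0 hq1 I, hent_pairZ I Iᶜ, Finset.union_compl]
  ring
end Main


/-- Lemma B.8 (le:unique) of the paper: under the positivity (non-degeneracy) condition,
if the `B*` constraints indexed by two distinct nonempty sets `I, I'` are both active at
some `R ∈ B*`, then `I ⊂ I'` or `I' ⊂ I`. -/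
theorem statement_10 (M' : ℕ) (𝒴 𝒵 : Fin M' → Type) [∀ i, Fintype (𝒴 i)]
    [∀ i, Fintype (𝒵 i)] (V : Type) [Fintype V]
    (p' : (∀ i, 𝒴 i) × V → ℝ) (q : ∀ m, 𝒴 m → 𝒵 m → ℝ)
    (hp'0 : ∀ yv, 0 ≤ p' yv) (hp'1 : ∑ yv, p' yv = 1)
    (hq0 : ∀ m y z, 0 ≤ q m y z) (hq1 : ∀ m y, ∑ z, q m y z = 1)
    (hpos : ∀ A B C : Finset (Fin M'), A.Nonempty → B.Nonempty → Disjoint A B →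
      C ⊆ (A ∪ B)ᶜ → 0 < condMI (Pjoint p' q) (Zbar A) (Zbar B) (ZbarV C))
    (R : Fin M' → ℝ) (hR : memBstar p' q R)
    (I I' : Finset (Fin M')) (hI : I.Nonempty) (hI' : I'.Nonempty) (hne : I ≠ I')
    (heq : condMI (Pjoint p' q) (Ybar I) (Zbar I) (ZbarV Iᶜ) = ∑ i ∈ I, R i)
    (heq' : condMI (Pjoint p' q) (Ybar I') (Zbar I') (ZbarV I'ᶜ) = ∑ i ∈ I', R i) :
    I ⊂ I' ∨ I' ⊂ I := by
  by_contra hcon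
  push_neg at hcon
  obtain ⟨hn1, hn2⟩ := hcon
  have hAne : (I' \ I).Nonempty := by
    rw [Finset.sdiff_nonempty]
    intro hsub
    exact hn2 (Finset.ssubset_iff_subset_ne.mpr ⟨hsub, fun h => hne h.symm⟩)
  have hBne : (I \ I').Nonempty := by
    rw [Finset.sdiff_nonempty]
    intro hsub
    exact hn1 (Finset.ssubset_iff_subset_ne.mpr ⟨hsub, hne⟩)
  have hCsub : (I ∪ I')ᶜ ⊆ ((I' \ I) ∪ (I \ I'))ᶜ := by
    intro x hx
    simp only [Finset.mem_compl, Finset.mem_union, Finset.mem_sdiff] at *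
    tauto
  have hpos' := hpos (I' \ I) (I \ I') ((I ∪ I')ᶜ) hAne hBne
    (disjoint_sdiff_sdiff) hCsub
  have e1 : (I' \ I) ∪ (I ∪ I')ᶜ = Iᶜ := by
    ext x
    simp only [Finset.mem_compl, Finset.mem_union, Finset.mem_sdiff]
    tauto
  have e2 : (I \ I') ∪ (I ∪ I')ᶜ = I'ᶜ := by
    ext x
    simp only [Finset.mem_compl, Finset.mem_union, Finset.mem_sdiff]
    tauto
  have e3 : (I' \ I) ∪ (I \ I') ∪ (I ∪ I')ᶜ = (I ∩ I')ᶜ := by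
    ext x
    simp only [Finset.mem_compl, Finset.mem_union, Finset.mem_sdiff, Finset.mem_inter]
    tauto
  have hdelta := condMI_z_formula p' q (I' \ I) (I \ I') ((I ∪ I')ᶜ)
  rw [e1, e2, e3] at hdelta
  rw [hdelta] at hpos'
  have hfI := condMI_formula p' q hp'0 hq0 hq1 I
  have hfI' := condMI_formula p' q hp'0 hq0 hq1 I'
  have hfU := condMI_formula p' q hp'0 hq0 hq1 (I ∪ I')
  have hfN := condMI_formula p' q hp'0 hq0 hq1 (I ∩ I')
  rw [heq] at hfI
  rw [heq'] at hfI'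
  have hU : condMI (Pjoint p' q) (Ybar (I ∪ I')) (Zbar (I ∪ I')) (ZbarV (I ∪ I')ᶜ)
      ≤ ∑ i ∈ I ∪ I', R i := by
    obtain ⟨x, hx⟩ := hI
    exact hR (I ∪ I') ⟨x, Finset.mem_union_left _ hx⟩
  have hN : condMI (Pjoint p' q) (Ybar (I ∩ I')) (Zbar (I ∩ I')) (ZbarV (I ∩ I')ᶜ)
      ≤ ∑ i ∈ I ∩ I', R i := by
    rcases (I ∩ I').eq_empty_or_nonempty with he | hne'
    · rw [he, condMI_formula p' q hp'0 hq0 hq1 ∅, Finset.compl_empty]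
      simp
    · exact hR (I ∩ I') hne'
  rw [hfU] at hU
  rw [hfN] at hN
  have hsumR : ∑ i ∈ I ∪ I', R i + ∑ i ∈ I ∩ I', R i = ∑ i ∈ I, R i + ∑ i ∈ I', R i :=
    Finset.sum_union_inter
  have hsumc : ∑ i ∈ I ∪ I', (-∑ ω : Samp 𝒴 𝒵 V,
        Pjoint p' q ω * Real.logb 2 (q i (ω.1 i) (ω.2.1 i)))
      + ∑ i ∈ I ∩ I', (-∑ ω : Samp 𝒴 𝒵 V,
        Pjoint p' q ω * Real.logb 2 (q i (ω.1 i) (ω.2.1 i)))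
      = ∑ i ∈ I, (-∑ ω : Samp 𝒴 𝒵 V,
        Pjoint p' q ω * Real.logb 2 (q i (ω.1 i) (ω.2.1 i)))
      + ∑ i ∈ I', (-∑ ω : Samp 𝒴 𝒵 V,
        Pjoint p' q ω * Real.logb 2 (q i (ω.1 i) (ω.2.1 i))) :=
    Finset.sum_union_inter
  linarith
end
end
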